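/- arXiv:1406.3295 — 2 statements merged into one kernel-verified Lean document; each statement's English description precedes it below -/
import Mathlib

section
/- Let X ∈ R^{I_1×I_2×I_3} have multilinear rank (R_1, R_2, I_3), i.e., X = G ×_1 A_1 ×_2 A_2 with full-rank core G ∈ R^{R_1×R_2×I_3}, and let Φ_1 ∈ R^{R_1×I_1}, Φ_2 ∈ R^{R_2×I_2} be such that Φ_1 A_1 and Φ_2 A_2 are invertible. Define W = X ×_1 Φ_1 ×_2 Φ_2, Z_1 = (X ×_2 Φ_2)_{(1)}, Z_2 = (X ×_1 Φ_1)_{(2)}. Then X = W ×_1 Z_1 W_{(1)}^† ×_2 Z_2 W_{(2)}^† ×_3 W_{(3)} W_{(3)}^†. -/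
/-!
Write `B₁ = Φ₁A₁`, `B₂ = Φ₂A₂` (invertible). Then `W = G ×₁ B₁ ×₂ B₂`, and the mode-1 unfoldings
factor through the same matrix `M₁ = (G ×₂ B₂)₍₁₎`, of full row rank: `W₍₁₎ = B₁M₁` and
`Z₁ = A₁M₁`. A generalized inverse of a full-row-rank matrix is a right inverse, so
`B₁M₁W₍₁₎^† = 1`, hence `M₁W₍₁₎^† = B₁⁻¹` and `Z₁W₍₁₎^† B₁ = A₁`; likewise `Z₂W₍₂₎^† B₂ = A₂`.
Therefore `X = G ×₁ A₁ ×₂ A₂ = W ×₁ Z₁W₍₁₎^† ×₂ Z₂W₍₂₎^†`, and `W₍₃₎W₍₃₎^†` fixes the columns of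
`W₍₃₎`, so the mode-3 product leaves `W` unchanged.
-/

open Matrix Kronecker

namespace Matrix

variable {m n p l K : Type*} [Fintype m] [Fintype n] [Fintype p] [Field K]

theorem isUnit_of_rank_eq_card [DecidableEq m] {A : Matrix m m K}
    (hA : A.rank = Fintype.card m) : IsUnit A := by
  rw [← mulVec_surjective_iff_isUnit, ← coe_mulVecLin, ← LinearMap.range_eq_top]
  apply Submodule.eq_top_of_finrank_eq
  rw [← rank, hA, Module.finrank_fintype_fun_eq_card]

theorem mul_eq_one_of_mul_mul_eq_self_of_rank_eq_card [DecidableEq m] {A : Matrix m n K}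
    {P : Matrix n m K} (hA : A.rank = Fintype.card m) (hP : A * P * A = A) : A * P = 1 := by
  have hAP : IsUnit (A * P) := by
    refine isUnit_of_rank_eq_card (le_antisymm (rank_le_card_height _) ?_)
    calc Fintype.card m = (A * P * A).rank := by rw [hP, hA]
      _ ≤ (A * P).rank := rank_mul_le_left _ _
  refine (IsIdempotentElem.iff_eq_one_of_isUnit hAP).mp ?_
  change A * P * (A * P) = A * P
  rw [← Matrix.mul_assoc, hP]

theorem mul_mul_mul_eq_of_rank_eq_card [DecidableEq n] (A : Matrix l n K) {B : Matrix n n K}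
    {M : Matrix n p K} {P : Matrix p n K} (hB : IsUnit B.det) (hM : M.rank = Fintype.card n)
    (hP : B * M * P * (B * M) = B * M) : A * M * P * B = A := by
  have hBM : B * M * P = 1 := mul_eq_one_of_mul_mul_eq_self_of_rank_eq_card
    (by rw [rank_mul_eq_right_of_isUnit_det B M hB, hM]) hP
  rw [Matrix.mul_assoc B, mul_eq_one_comm] at hBM
  rw [Matrix.mul_assoc A, Matrix.mul_assoc, hBM, Matrix.mul_one]

end Matrix

namespace Tensor3

variable {R : Type*} [CommSemiring R] {α β γ ι κ : Type*}

/- `modeN M T` is the mode-`N` product `T ×ₙ M`, and `unfoldN T` the mode-`N` unfolding `T₍ₙ₎`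
with columns indexed by the remaining two modes in their original order. -/
def mode1 [Fintype α] (M : Matrix ι α R) (T : α → β → γ → R) : ι → β → γ → R :=
  fun i b c => ∑ a, M i a * T a b c

def mode2 [Fintype β] (M : Matrix ι β R) (T : α → β → γ → R) : α → ι → γ → R :=
  fun a j c => ∑ b, M j b * T a b c

def mode3 [Fintype γ] (M : Matrix ι γ R) (T : α → β → γ → R) : α → β → ι → R :=
  fun a b k => ∑ c, M k c * T a b c

def unfold1 (T : α → β → γ → R) : Matrix α (β × γ) R := of fun a q => T a q.1 q.2

def unfold2 (T : α → β → γ → R) : Matrix β (α × γ) R := of fun b q => T q.1 b q.2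

def unfold3 (T : α → β → γ → R) : Matrix γ (α × β) R := of fun c q => T q.1 q.2 c

theorem mode1_mode1 [Fintype α] [Fintype ι] (M : Matrix κ ι R) (N : Matrix ι α R)
    (T : α → β → γ → R) : mode1 M (mode1 N T) = mode1 (M * N) T := by
  funext i b c
  simp only [mode1, mul_apply, Finset.mul_sum, Finset.sum_mul, mul_assoc]
  exact Finset.sum_comm

theorem mode2_mode2 [Fintype β] [Fintype ι] (M : Matrix κ ι R) (N : Matrix ι β R)
    (T : α → β → γ → R) : mode2 M (mode2 N T) = mode2 (M * N) T := by
  funext a j c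
  simp only [mode2, mul_apply, Finset.mul_sum, Finset.sum_mul, mul_assoc]
  exact Finset.sum_comm

theorem mode1_mode2_comm [Fintype α] [Fintype β] (M : Matrix ι α R) (N : Matrix κ β R)
    (T : α → β → γ → R) : mode1 M (mode2 N T) = mode2 N (mode1 M T) := by
  funext i j c
  simp only [mode1, mode2, Finset.mul_sum, mul_left_comm (M i _)]
  exact Finset.sum_comm

theorem mode1_mode2_mode1_mode2 [Fintype α] [Fintype β] [Fintype ι] [Fintype κ]
    {ι' κ' : Type*} (M : Matrix ι' ι R) (N : Matrix κ' κ R) (M' : Matrix ι α R)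
    (N' : Matrix κ β R) (T : α → β → γ → R) :
    mode1 M (mode2 N (mode1 M' (mode2 N' T))) = mode1 (M * M') (mode2 (N * N') T) := by
  rw [← mode1_mode2_comm M', mode2_mode2, mode1_mode1]

theorem mode1_mode2_apply [Fintype α] [Fintype β] (M : Matrix ι α R) (N : Matrix κ β R)
    (T : α → β → γ → R) (i : ι) (j : κ) (c : γ) :
    mode1 M (mode2 N T) i j c = ∑ a, ∑ b, M i a * N j b * T a b c := by
  simp only [mode1, mode2, Finset.mul_sum, mul_assoc]

theorem mode1_mode2_mode3_apply [Fintype α] [Fintype β] [Fintype γ] (M : Matrix ι α R)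
    (N : Matrix κ β R) {μ : Type*} (L : Matrix μ γ R) (T : α → β → γ → R) (i : ι) (j : κ)
    (k : μ) : mode1 M (mode2 N (mode3 L T)) i j k =
      ∑ a, ∑ b, ∑ c, M i a * N j b * L k c * T a b c := by
  simp only [mode1_mode2_apply, mode3, Finset.mul_sum, mul_assoc]

theorem unfold1_mode1 [Fintype α] (M : Matrix ι α R) (T : α → β → γ → R) :
    unfold1 (mode1 M T) = M * unfold1 T := rfl

theorem unfold2_mode2 [Fintype β] (M : Matrix ι β R) (T : α → β → γ → R) :
    unfold2 (mode2 M T) = M * unfold2 T := rfl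

theorem unfold1_mode2 [Fintype β] [Fintype γ] [DecidableEq γ] (M : Matrix ι β R)
    (T : α → β → γ → R) : unfold1 (mode2 M T) = unfold1 T * (Mᵀ ⊗ₖ (1 : Matrix γ γ R)) := by
  ext a ⟨j, c⟩
  simp [unfold1, mode2, mul_apply, Fintype.sum_prod_type, one_apply, mul_comm]

theorem unfold2_mode1 [Fintype α] [Fintype γ] [DecidableEq γ] (M : Matrix ι α R)
    (T : α → β → γ → R) : unfold2 (mode1 M T) = unfold2 T * (Mᵀ ⊗ₖ (1 : Matrix γ γ R)) := by
  ext b ⟨i, c⟩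
  simp [unfold2, mode1, mul_apply, Fintype.sum_prod_type, one_apply, mul_comm]

theorem mode3_eq_self_of_mul_unfold3_eq [Fintype γ] {M : Matrix γ γ R} {T : α → β → γ → R}
    (h : M * unfold3 T = unfold3 T) : mode3 M T = T :=
  funext fun a => funext fun b => funext fun c => congrFun (congrFun h c) (a, b)

section Field

variable {K : Type*} [Field K] [Fintype γ] [DecidableEq γ]

theorem rank_unfold1_mode2 [Fintype β] [DecidableEq β] {M : Matrix β β K} (hM : IsUnit M.det)
    (T : α → β → γ → K) : (unfold1 (mode2 M T)).rank = (unfold1 T).rank := by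
  rw [unfold1_mode2]
  refine rank_mul_eq_left_of_isUnit_det _ _ ?_
  rw [det_kronecker, det_transpose, det_one, one_pow, mul_one]
  exact hM.pow _

theorem rank_unfold2_mode1 [Fintype α] [DecidableEq α] {M : Matrix α α K} (hM : IsUnit M.det)
    (T : α → β → γ → K) : (unfold2 (mode1 M T)).rank = (unfold2 T).rank := by
  rw [unfold2_mode1]
  refine rank_mul_eq_left_of_isUnit_det _ _ ?_
  rw [det_kronecker, det_transpose, det_one, one_pow, mul_one]
  exact hM.pow _

end Field

end Tensor3

open Tensor3

theorem exact_recovery_3D_identity_mode3_general (I1 I2 I3 R1 R2 : ℕ)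
    (X : Fin I1 → Fin I2 → Fin I3 → ℝ) (G : Fin R1 → Fin R2 → Fin I3 → ℝ)
    (A1 : Matrix (Fin I1) (Fin R1) ℝ) (A2 : Matrix (Fin I2) (Fin R2) ℝ)
    (hX : ∀ i j k, X i j k = ∑ r1, ∑ r2, A1 i r1 * A2 j r2 * G r1 r2 k)
    -- the core G is full-rank in every mode (multilinear rank (R1, R2, I3)):
    (hG1 : (Matrix.of fun (r1 : Fin R1) (p : Fin R2 × Fin I3) => G r1 p.1 p.2).rank = R1)
    (hG2 : (Matrix.of fun (r2 : Fin R2) (p : Fin R1 × Fin I3) => G p.1 r2 p.2).rank = R2)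
    (Φ1 : Matrix (Fin R1) (Fin I1) ℝ) (Φ2 : Matrix (Fin R2) (Fin I2) ℝ)
    (h1 : IsUnit (Φ1 * A1).det) (h2 : IsUnit (Φ2 * A2).det)
    (W : Fin R1 → Fin R2 → Fin I3 → ℝ)
    (hW : ∀ r1 r2 k, W r1 r2 k = ∑ i, ∑ j, Φ1 r1 i * Φ2 r2 j * X i j k)
    (Z1 : Matrix (Fin I1) (Fin R2 × Fin I3) ℝ)
    (hZ1 : ∀ i p, Z1 i p = ∑ j, Φ2 p.1 j * X i j p.2)
    (Z2 : Matrix (Fin I2) (Fin R1 × Fin I3) ℝ)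
    (hZ2 : ∀ j p, Z2 j p = ∑ i, Φ1 p.1 i * X i j p.2)
    (W1 : Matrix (Fin R1) (Fin R2 × Fin I3) ℝ) (hW1 : ∀ r p, W1 r p = W r p.1 p.2)
    (W2 : Matrix (Fin R2) (Fin R1 × Fin I3) ℝ) (hW2 : ∀ r p, W2 r p = W p.1 r p.2)
    (W3 : Matrix (Fin I3) (Fin R1 × Fin R2) ℝ) (hW3 : ∀ k p, W3 k p = W p.1 p.2 k)
    (P1 : Matrix (Fin R2 × Fin I3) (Fin R1) ℝ)
    (hP11 : W1 * P1 * W1 = W1)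
    (P2 : Matrix (Fin R1 × Fin I3) (Fin R2) ℝ)
    (hP21 : W2 * P2 * W2 = W2)
    (P3 : Matrix (Fin R1 × Fin R2) (Fin I3) ℝ)
    (hP31 : W3 * P3 * W3 = W3) :
    ∀ i j k, X i j k = ∑ r1, ∑ r2, ∑ k',
      (Z1 * P1) i r1 * (Z2 * P2) j r2 * (W3 * P3) k k' * W r1 r2 k' := by
  have hXG : X = mode1 A1 (mode2 A2 G) := by
    funext i j k; rw [hX, mode1_mode2_apply]
  have hWG : W = mode1 (Φ1 * A1) (mode2 (Φ2 * A2) G) := by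
    have hWX : W = mode1 Φ1 (mode2 Φ2 X) := by funext r1 r2 k; rw [hW, mode1_mode2_apply]
    rw [hWX, hXG, mode1_mode2_mode1_mode2]
  have hA1 : Z1 * P1 * (Φ1 * A1) = A1 := by
    have hZ1G : Z1 = A1 * unfold1 (mode2 (Φ2 * A2) G) := by
      rw [show Z1 = unfold1 (mode2 Φ2 X) from Matrix.ext hZ1, hXG, ← mode1_mode2_comm,
        mode2_mode2, unfold1_mode1]
    rw [show W1 = unfold1 W from Matrix.ext hW1, hWG, unfold1_mode1] at hP11
    rw [hZ1G]
    exact mul_mul_mul_eq_of_rank_eq_card A1 h1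
      (by rw [rank_unfold1_mode2 h2, Fintype.card_fin]; exact hG1) hP11
  have hA2 : Z2 * P2 * (Φ2 * A2) = A2 := by
    have hZ2G : Z2 = A2 * unfold2 (mode1 (Φ1 * A1) G) := by
      rw [show Z2 = unfold2 (mode1 Φ1 X) from Matrix.ext hZ2, hXG, mode1_mode1,
        mode1_mode2_comm, unfold2_mode2]
    rw [show W2 = unfold2 W from Matrix.ext hW2, hWG, mode1_mode2_comm, unfold2_mode2] at hP21
    rw [hZ2G]
    exact mul_mul_mul_eq_of_rank_eq_card A2 h2
      (by rw [rank_unfold2_mode1 h1, Fintype.card_fin]; exact hG2) hP21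
  have hW3P3 : mode3 (W3 * P3) W = W := by
    rw [show W3 = unfold3 W from Matrix.ext hW3] at hP31 ⊢
    exact mode3_eq_self_of_mul_unfold3_eq hP31
  have hXW : X = mode1 (Z1 * P1) (mode2 (Z2 * P2) (mode3 (W3 * P3) W)) := by
    rw [hW3P3, hWG, mode1_mode2_mode1_mode2, hA1, hA2, hXG]
  intro i j k
  rw [← mode1_mode2_mode3_apply, ← hXW]

/-- the 3D special case with Φ₃ = I (same 2D sensing operator applied to all
frontal slices): X = W ×₁ Z₁W₍₁₎† ×₂ Z₂W₍₂₎† ×₃ W₍₃₎W₍₃₎†.  Pseudo-inverses are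
characterized by the Penrose conditions. -/
theorem exact_recovery_3D_identity_mode3 (I1 I2 I3 R1 R2 : ℕ)
    (X : Fin I1 → Fin I2 → Fin I3 → ℝ) (G : Fin R1 → Fin R2 → Fin I3 → ℝ)
    (A1 : Matrix (Fin I1) (Fin R1) ℝ) (A2 : Matrix (Fin I2) (Fin R2) ℝ)
    (hX : ∀ i j k, X i j k = ∑ r1, ∑ r2, A1 i r1 * A2 j r2 * G r1 r2 k)
    -- the core G is full-rank in every mode (multilinear rank (R1, R2, I3)):
    (hG1 : (Matrix.of fun (r1 : Fin R1) (p : Fin R2 × Fin I3) => G r1 p.1 p.2).rank = R1)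
    (hG2 : (Matrix.of fun (r2 : Fin R2) (p : Fin R1 × Fin I3) => G p.1 r2 p.2).rank = R2)
    (hG3 : (Matrix.of fun (k : Fin I3) (p : Fin R1 × Fin R2) => G p.1 p.2 k).rank = I3)
    (Φ1 : Matrix (Fin R1) (Fin I1) ℝ) (Φ2 : Matrix (Fin R2) (Fin I2) ℝ)
    (h1 : IsUnit (Φ1 * A1).det) (h2 : IsUnit (Φ2 * A2).det)
    (W : Fin R1 → Fin R2 → Fin I3 → ℝ)
    (hW : ∀ r1 r2 k, W r1 r2 k = ∑ i, ∑ j, Φ1 r1 i * Φ2 r2 j * X i j k)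
    (Z1 : Matrix (Fin I1) (Fin R2 × Fin I3) ℝ)
    (hZ1 : ∀ i p, Z1 i p = ∑ j, Φ2 p.1 j * X i j p.2)
    (Z2 : Matrix (Fin I2) (Fin R1 × Fin I3) ℝ)
    (hZ2 : ∀ j p, Z2 j p = ∑ i, Φ1 p.1 i * X i j p.2)
    (W1 : Matrix (Fin R1) (Fin R2 × Fin I3) ℝ) (hW1 : ∀ r p, W1 r p = W r p.1 p.2)
    (W2 : Matrix (Fin R2) (Fin R1 × Fin I3) ℝ) (hW2 : ∀ r p, W2 r p = W p.1 r p.2)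
    (W3 : Matrix (Fin I3) (Fin R1 × Fin R2) ℝ) (hW3 : ∀ k p, W3 k p = W p.1 p.2 k)
    (P1 : Matrix (Fin R2 × Fin I3) (Fin R1) ℝ)
    (hP11 : W1 * P1 * W1 = W1) (hP12 : P1 * W1 * P1 = P1)
    (hP13 : (W1 * P1)ᵀ = W1 * P1) (hP14 : (P1 * W1)ᵀ = P1 * W1)
    (P2 : Matrix (Fin R1 × Fin I3) (Fin R2) ℝ)
    (hP21 : W2 * P2 * W2 = W2) (hP22 : P2 * W2 * P2 = P2)
    (hP23 : (W2 * P2)ᵀ = W2 * P2) (hP24 : (P2 * W2)ᵀ = P2 * W2)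
    (P3 : Matrix (Fin R1 × Fin R2) (Fin I3) ℝ)
    (hP31 : W3 * P3 * W3 = W3) (hP32 : P3 * W3 * P3 = P3)
    (hP33 : (W3 * P3)ᵀ = W3 * P3) (hP34 : (P3 * W3)ᵀ = P3 * W3) :
    ∀ i j k, X i j k = ∑ r1, ∑ r2, ∑ k',
      (Z1 * P1) i r1 * (Z2 * P2) j r2 * (W3 * P3) k k' * W r1 r2 k' :=
  exact_recovery_3D_identity_mode3_general I1 I2 I3 R1 R2 X G A1 A2 hX hG1 hG2 Φ1 Φ2 h1 h2 W hW Z1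
    hZ1 Z2 hZ2 W1 hW1 W2 hW2 W3 hW3 P1 hP11 P2 hP21 P3 hP31
end

section
/- Let W ∈ R^{R_1×R_2×R_3}, let Ω = W ×_1 W_{(1)}^{*τ} ×_2 W_{(2)}^{*τ} ×_3 W_{(3)}^{*τ}, and let F_1 ∈ R^{I_1×R_1}, F_2 ∈ R^{I_2×R_2} be arbitrary matrices. Then the tensor B_4 = Ω ×_1 F_1 ×_2 F_2 ×_3 W_{(3)} satisfies ‖B_4‖_F ≤ ‖F_1‖_F ‖F_2‖_F / max(τ, σ_R), where σ_R is the minimum of the smallest positive singular values of W_{(1)} and W_{(2)}, assuming τ ≤ σ_max of each unfolding. -/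
/-!
Rewriting the mode products, `B₄ = W ×₁ F₁W₍₁₎^{*τ} ×₂ F₂W₍₂₎^{*τ} ×₃ W₍₃₎W₍₃₎^{*τ}`.
Contracting one mode of a tensor with a matrix multiplies its squared Frobenius norm by at most
the squared spectral norm of the matrix. Through the SVDs, `W₍₃₎W₍₃₎^{*τ}` and `W₍₁₎^{*τ}W₍₁₎` are
orthogonal conjugates of diagonal 0/1 matrices, hence have norm at most 1, while
`‖F₂W₍₂₎^{*τ}‖ ≤ ‖F₂‖_F / max(τ, σ_{R₂})`. The mode-1 contraction is read off the unfolding: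
its Frobenius norm is `‖F₁ (W₍₁₎^{*τ} W₍₁₎)‖_F ≤ ‖F₁‖_F ‖(W₍₁₎^{*τ} W₍₁₎)ᵀ‖ ≤ ‖F₁‖_F`.
-/

open Matrix

theorem Fin.sum_ite_val_eq {M : Type*} [AddCommMonoid M] {n : ℕ} (k : ℕ) (f : Fin n → M) :
    (∑ j : Fin n, if k = j then f j else 0) = if h : k < n then f ⟨k, h⟩ else 0 := by
  split_ifs with h
  · rw [Finset.sum_eq_single_of_mem ⟨k, h⟩ (Finset.mem_univ _)]
    · simp
    · intro j _ hj
      rw [if_neg fun hk => hj (Fin.ext hk.symm)]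
  · exact Finset.sum_eq_zero fun j _ => if_neg fun hk : k = j => h (hk ▸ j.isLt)

namespace Matrix

section OpNorm

variable {ι κ μ : Type*} [Fintype ι] [Fintype κ] [Fintype μ]

def OpNormSqLE (M : Matrix ι κ ℝ) (C : ℝ) : Prop :=
  ∀ v : κ → ℝ, ∑ i, (M *ᵥ v) i ^ 2 ≤ C * ∑ j, v j ^ 2

def frobNormSq (M : Matrix ι κ ℝ) : ℝ := ∑ i, ∑ j, M i j ^ 2

theorem frobNormSq_nonneg (M : Matrix ι κ ℝ) : 0 ≤ frobNormSq M := by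
  unfold frobNormSq
  positivity

theorem OpNormSqLE.mul {A : Matrix ι κ ℝ} {B : Matrix κ μ ℝ} {C D : ℝ} (hA : OpNormSqLE A C)
    (hB : OpNormSqLE B D) (hC : 0 ≤ C) : OpNormSqLE (A * B) (C * D) := fun v => by
  rw [← mulVec_mulVec, mul_assoc]
  exact (hA _).trans (mul_le_mul_of_nonneg_left (hB v) hC)

theorem opNormSqLE_frobNormSq (A : Matrix ι κ ℝ) : OpNormSqLE A (frobNormSq A) := fun v => by
  rw [frobNormSq, Finset.sum_mul]
  exact Finset.sum_le_sum fun i _ => Finset.sum_mul_sq_le_sq_mul_sq _ _ _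

/-- The rows of `A * B` are the images of the rows of `A` under `Bᵀ`. -/
theorem frobNormSq_mul_le {A : Matrix ι κ ℝ} {B : Matrix κ μ ℝ} {C : ℝ} (hB : OpNormSqLE Bᵀ C) :
    frobNormSq (A * B) ≤ C * frobNormSq A := by
  rw [frobNormSq, frobNormSq, Finset.mul_sum]
  refine Finset.sum_le_sum fun i _ => ?_
  have h := hB (A i)
  rwa [mulVec_transpose] at h

theorem sum_sq_mulVec_of_transpose_mul_self [DecidableEq ι] {Q : Matrix ι ι ℝ} (hQ : Qᵀ * Q = 1)
    (v : ι → ℝ) : ∑ i, (Q *ᵥ v) i ^ 2 = ∑ i, v i ^ 2 := by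
  have h (x : ι → ℝ) : ∑ i, x i ^ 2 = x ⬝ᵥ x := by simp only [dotProduct, sq]
  rw [h, h, dotProduct_mulVec, ← mulVec_transpose, mulVec_mulVec, hQ, one_mulVec]

theorem OpNormSqLE.orthogonal_conj [DecidableEq ι] [DecidableEq κ] {M : Matrix ι κ ℝ} {C : ℝ}
    {Q₁ : Matrix ι ι ℝ} {Q₂ : Matrix κ κ ℝ} (h : OpNormSqLE M C) (hQ₁ : Q₁ᵀ * Q₁ = 1)
    (hQ₂ : Q₂ᵀ * Q₂ = 1) : OpNormSqLE (Q₁ * M * Q₂ᵀ) C := fun v => by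
  have hQ₂' : Q₂ᵀᵀ * Q₂ᵀ = 1 := by rw [transpose_transpose]; exact mul_eq_one_comm.mp hQ₂
  rw [← mulVec_mulVec, ← mulVec_mulVec, sum_sq_mulVec_of_transpose_mul_self hQ₁,
    ← sum_sq_mulVec_of_transpose_mul_self hQ₂' v]
  exact h _

end OpNorm

section RectDiag

variable {R : Type*}

def rectDiag [Zero R] (m n : ℕ) (d : ℕ → R) : Matrix (Fin m) (Fin n) R :=
  of fun i j => if (i : ℕ) = j then d i else 0

theorem rectDiag_transpose [Zero R] (m n : ℕ) (d : ℕ → R) :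
    (rectDiag m n d)ᵀ = rectDiag n m d := by
  ext i j
  simp only [transpose_apply, rectDiag, of_apply, eq_comm (a := (j : ℕ))]
  split_ifs with h <;> simp [h]

theorem rectDiag_mul_rectDiag [NonUnitalNonAssocSemiring R] {m k n : ℕ} (d e : ℕ → R) :
    rectDiag m k d * rectDiag k n e = rectDiag m n (fun r => if r < k then d r * e r else 0) := by
  ext i j
  simp only [mul_apply, rectDiag, of_apply, ite_mul, zero_mul]
  rw [Fin.sum_ite_val_eq]
  split_ifs <;> simp_all

theorem opNormSqLE_rectDiag {m n : ℕ} {d : ℕ → ℝ} {C : ℝ} (hd : ∀ r, d r ^ 2 ≤ C) :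
    OpNormSqLE (rectDiag m n d) C := fun v => by
  have hC : 0 ≤ C := (sq_nonneg _).trans (hd 0)
  have hsq (i : Fin m) : (rectDiag m n d *ᵥ v) i ^ 2 =
      ∑ j : Fin n, if (i : ℕ) = j then (d i * v j) ^ 2 else 0 := by
    simp only [mulVec, dotProduct, rectDiag, of_apply, ite_mul, zero_mul]
    rw [Fin.sum_ite_val_eq, Fin.sum_ite_val_eq]
    split_ifs <;> simp
  calc ∑ i, (rectDiag m n d *ᵥ v) i ^ 2
      ≤ ∑ i : Fin m, ∑ j : Fin n, if (j : ℕ) = i then C * v j ^ 2 else 0 := by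
        simp only [hsq, eq_comm (a := ((_ : Fin m) : ℕ))]
        gcongr with i _ j _
        split_ifs
        · rw [mul_pow]
          exact mul_le_mul_of_nonneg_right (hd _) (sq_nonneg _)
        · rfl
    _ = ∑ j : Fin n, if (j : ℕ) < m then C * v j ^ 2 else 0 := by
        rw [Finset.sum_comm]
        simp only [Fin.sum_ite_val_eq, dite_eq_ite]
    _ ≤ C * ∑ j, v j ^ 2 := by
        rw [Finset.mul_sum]
        gcongr with j
        split_ifs
        · rfl
        · positivity

end RectDiag

section TruncatedPseudoInverse

variable {m n : ℕ} {U : Matrix (Fin m) (Fin m) ℝ} {V : Matrix (Fin n) (Fin n) ℝ} {σ : ℕ → ℝ}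
  {τ : ℝ}

/-- The diagonal of the `τ`-truncated pseudo-inverse `W^{*τ} = V (truncInv τ σ) Uᵀ`
of `W = U σ Vᵀ`. -/
noncomputable def truncInv (τ : ℝ) (σ : ℕ → ℝ) (r : ℕ) : ℝ := if τ < σ r then (σ r)⁻¹ else 0

theorem rectDiag_truncInv :
    rectDiag n m (truncInv τ σ) =
      of fun (j : Fin n) (i : Fin m) => if (j : ℕ) = i ∧ τ < σ i then (σ i)⁻¹ else 0 := by
  ext j i
  by_cases h : (j : ℕ) = i <;> simp [rectDiag, truncInv, h]

theorem sq_mul_truncInv_le_one (r : ℕ) : (σ r * truncInv τ σ r) ^ 2 ≤ 1 := by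
  unfold truncInv
  by_cases h : σ r = 0 <;> split_ifs <;> simp [h]

theorem opNormSqLE_svd_mul_pinv (hU : Uᵀ * U = 1) (hV : Vᵀ * V = 1) :
    OpNormSqLE (U * rectDiag m n σ * Vᵀ * (V * rectDiag n m (truncInv τ σ) * Uᵀ)) 1 := by
  have h : U * rectDiag m n σ * Vᵀ * (V * rectDiag n m (truncInv τ σ) * Uᵀ) =
      U * rectDiag m m (fun r => if r < n then σ r * truncInv τ σ r else 0) * Uᵀ := by
    rw [← rectDiag_mul_rectDiag]
    simp only [Matrix.mul_assoc]
    rw [← Matrix.mul_assoc Vᵀ V, hV, Matrix.one_mul]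
  rw [h]
  refine (opNormSqLE_rectDiag fun r => ?_).orthogonal_conj hU hU
  split_ifs
  · exact sq_mul_truncInv_le_one r
  · norm_num

theorem opNormSqLE_transpose_pinv_mul_svd (hU : Uᵀ * U = 1) (hV : Vᵀ * V = 1) :
    OpNormSqLE (V * rectDiag n m (truncInv τ σ) * Uᵀ * (U * rectDiag m n σ * Vᵀ))ᵀ 1 := by
  simpa only [transpose_mul, transpose_transpose, rectDiag_transpose, Matrix.mul_assoc] using
    opNormSqLE_svd_mul_pinv (σ := σ) (τ := τ) hV hU

theorem opNormSqLE_pinv (hτ : 0 ≤ τ) {s : ℝ} (hs : 0 < s) (hσs : ∀ r, 0 < σ r → s ≤ σ r)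
    (hU : Uᵀ * U = 1) (hV : Vᵀ * V = 1) :
    OpNormSqLE (V * rectDiag n m (truncInv τ σ) * Uᵀ) ((max τ s)⁻¹ ^ 2) := by
  refine (opNormSqLE_rectDiag fun r => ?_).orthogonal_conj hV hU
  unfold truncInv
  split_ifs with h
  · have hσ : 0 < σ r := hτ.trans_lt h
    gcongr
    exact max_le h.le (hσs r hσ)
  · simpa using sq_nonneg (max τ s)⁻¹

end TruncatedPseudoInverse

end Matrix

section ModeProducts

variable {R α β γ ι ι' : Type*} [CommSemiring R]

/-- `modeProdₙ A T` is the mode-`n` product `T ×ₙ A`. -/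
def modeProd₁ [Fintype α] (A : Matrix ι α R) (T : α → β → γ → R) : ι → β → γ → R :=
  fun i b c => ∑ a, A i a * T a b c

def modeProd₂ [Fintype β] (B : Matrix ι β R) (T : α → β → γ → R) : α → ι → γ → R :=
  fun a j c => ∑ b, B j b * T a b c

def modeProd₃ [Fintype γ] (C : Matrix ι γ R) (T : α → β → γ → R) : α → β → ι → R :=
  fun a b k => ∑ c, C k c * T a b c

theorem modeProd₃_modeProd₂_modeProd₁_apply [Fintype α] [Fintype β] [Fintype γ]
    {ι₁ ι₂ ι₃ : Type*} (A : Matrix ι₁ α R) (B : Matrix ι₂ β R) (C : Matrix ι₃ γ R)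
    (T : α → β → γ → R) (i : ι₁) (j : ι₂) (k : ι₃) :
    modeProd₃ C (modeProd₂ B (modeProd₁ A T)) i j k =
      ∑ a, ∑ b, ∑ c, A i a * B j b * C k c * T a b c := by
  simp only [modeProd₁, modeProd₂, modeProd₃, Finset.mul_sum]
  rw [Finset.sum_comm_cycle]
  refine Finset.sum_congr rfl fun a _ => ?_
  rw [Finset.sum_comm]
  exact Finset.sum_congr rfl fun b _ => Finset.sum_congr rfl fun c _ => by ring

theorem modeProd₁_modeProd₁ [Fintype α] [Fintype ι] (A : Matrix ι' ι R) (A' : Matrix ι α R)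
    (T : α → β → γ → R) : modeProd₁ A (modeProd₁ A' T) = modeProd₁ (A * A') T := by
  ext i b c
  simp only [modeProd₁, mul_apply, Finset.mul_sum, Finset.sum_mul, mul_assoc]
  exact Finset.sum_comm

theorem modeProd₂_modeProd₂ [Fintype β] [Fintype ι] (B : Matrix ι' ι R) (B' : Matrix ι β R)
    (T : α → β → γ → R) : modeProd₂ B (modeProd₂ B' T) = modeProd₂ (B * B') T := by
  ext a j c
  simp only [modeProd₂, mul_apply, Finset.mul_sum, Finset.sum_mul, mul_assoc]
  exact Finset.sum_comm

theorem modeProd₃_modeProd₃ [Fintype γ] [Fintype ι] (C : Matrix ι' ι R) (C' : Matrix ι γ R)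
    (T : α → β → γ → R) : modeProd₃ C (modeProd₃ C' T) = modeProd₃ (C * C') T := by
  ext a b k
  simp only [modeProd₃, mul_apply, Finset.mul_sum, Finset.sum_mul, mul_assoc]
  exact Finset.sum_comm

theorem modeProd₁_modeProd₂ [Fintype α] [Fintype β] (A : Matrix ι α R) (B : Matrix ι' β R)
    (T : α → β → γ → R) : modeProd₁ A (modeProd₂ B T) = modeProd₂ B (modeProd₁ A T) := by
  ext i j c
  simp only [modeProd₁, modeProd₂, Finset.mul_sum, mul_left_comm (A _ _)]
  exact Finset.sum_comm

theorem modeProd₁_modeProd₃ [Fintype α] [Fintype γ] (A : Matrix ι α R) (C : Matrix ι' γ R)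
    (T : α → β → γ → R) : modeProd₁ A (modeProd₃ C T) = modeProd₃ C (modeProd₁ A T) := by
  ext i b k
  simp only [modeProd₁, modeProd₃, Finset.mul_sum, mul_left_comm (A _ _)]
  exact Finset.sum_comm

theorem modeProd₂_modeProd₃ [Fintype β] [Fintype γ] (B : Matrix ι β R) (C : Matrix ι' γ R)
    (T : α → β → γ → R) : modeProd₂ B (modeProd₃ C T) = modeProd₃ C (modeProd₂ B T) := by
  ext a j k
  simp only [modeProd₂, modeProd₃, Finset.mul_sum, mul_left_comm (B _ _)]
  exact Finset.sum_comm

theorem modeProd_modeProd [Fintype α] [Fintype β] [Fintype γ] {κ₁ κ₂ κ₃ ι₁ ι₂ ι₃ : Type*}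
    [Fintype κ₁] [Fintype κ₂] [Fintype κ₃] (A : Matrix ι₁ κ₁ R) (B : Matrix ι₂ κ₂ R)
    (C : Matrix ι₃ κ₃ R) (A' : Matrix κ₁ α R) (B' : Matrix κ₂ β R) (C' : Matrix κ₃ γ R)
    (T : α → β → γ → R) :
    modeProd₃ C (modeProd₂ B (modeProd₁ A (modeProd₃ C' (modeProd₂ B' (modeProd₁ A' T))))) =
      modeProd₃ (C * C') (modeProd₂ (B * B') (modeProd₁ (A * A') T)) := by
  simp only [modeProd₁_modeProd₃, modeProd₁_modeProd₂, modeProd₂_modeProd₃, modeProd₁_modeProd₁,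
    modeProd₂_modeProd₂, modeProd₃_modeProd₃]

end ModeProducts

section TensorNorm

variable {α β γ ι κ : Type*} [Fintype α] [Fintype β] [Fintype γ] [Fintype ι]

def tensorNormSq (T : α → β → γ → ℝ) : ℝ :=
  ∑ a, ∑ b, ∑ c, T a b c ^ 2

theorem tensorNormSq_modeProd₂_le {B : Matrix ι β ℝ} {c : ℝ} (hB : OpNormSqLE B c)
    (T : α → β → γ → ℝ) : tensorNormSq (modeProd₂ B T) ≤ c * tensorNormSq T := by
  rw [tensorNormSq, tensorNormSq, Finset.mul_sum]
  refine Finset.sum_le_sum fun a _ => ?_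
  rw [Finset.sum_comm, Finset.sum_comm (f := fun b c => T a b c ^ 2), Finset.mul_sum]
  exact Finset.sum_le_sum fun c _ => hB fun b => T a b c

theorem tensorNormSq_modeProd₃_le {C : Matrix ι γ ℝ} {c : ℝ} (hC : OpNormSqLE C c)
    (T : α → β → γ → ℝ) : tensorNormSq (modeProd₃ C T) ≤ c * tensorNormSq T := by
  rw [tensorNormSq, tensorNormSq, Finset.mul_sum]
  refine Finset.sum_le_sum fun a _ => ?_
  rw [Finset.mul_sum]
  exact Finset.sum_le_sum fun b _ => hC (T a b)

theorem tensorNormSq_modeProd₁_eq_frobNormSq_mul [Fintype κ] (A : Matrix ι α ℝ)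
    {T : α → β → γ → ℝ} {M : Matrix α κ ℝ} (e : β × γ ≃ κ)
    (hM : ∀ a b c, M a (e (b, c)) = T a b c) :
    tensorNormSq (modeProd₁ A T) = frobNormSq (A * M) := by
  refine Finset.sum_congr rfl fun i _ => ?_
  rw [← e.sum_comp, Fintype.sum_prod_type]
  simp only [modeProd₁, mul_apply, hM]

theorem tensorNormSq_modeProd_mul_le {ι₁ ι₂ ι₃ κ₁ κ₂ : Type*} [Fintype κ] [Fintype ι₁]
    [Fintype ι₂] [Fintype ι₃] [Fintype κ₁] [Fintype κ₂] {T : α → β → γ → ℝ} {M : Matrix α κ ℝ}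
    (e : β × γ ≃ κ) (hM : ∀ a b c, M a (e (b, c)) = T a b c) (F₁ : Matrix ι₁ κ₁ ℝ)
    (F₂ : Matrix ι₂ κ₂ ℝ) {P₁ : Matrix κ₁ α ℝ} {P₂ : Matrix κ₂ β ℝ} {C : Matrix ι₃ γ ℝ}
    {c₁ c₂ c₃ : ℝ}
    (h₁ : OpNormSqLE (P₁ * M)ᵀ c₁) (h₂ : OpNormSqLE P₂ c₂) (h₃ : OpNormSqLE C c₃)
    (hc₂ : 0 ≤ c₂) (hc₃ : 0 ≤ c₃) :
    tensorNormSq (modeProd₃ C (modeProd₂ (F₂ * P₂) (modeProd₁ (F₁ * P₁) T))) ≤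
      c₃ * (frobNormSq F₂ * c₂ * (c₁ * frobNormSq F₁)) := by
  have hF₂ := frobNormSq_nonneg F₂
  have hFPM := frobNormSq_nonneg (F₁ * (P₁ * M))
  calc _ ≤ c₃ * tensorNormSq (modeProd₂ (F₂ * P₂) (modeProd₁ (F₁ * P₁) T)) :=
        tensorNormSq_modeProd₃_le h₃ _
    _ ≤ c₃ * (frobNormSq F₂ * c₂ * tensorNormSq (modeProd₁ (F₁ * P₁) T)) := by
        gcongr
        exact tensorNormSq_modeProd₂_le ((opNormSqLE_frobNormSq F₂).mul h₂ hF₂) _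
    _ ≤ c₃ * (frobNormSq F₂ * c₂ * (c₁ * frobNormSq F₁)) := by
        rw [tensorNormSq_modeProd₁_eq_frobNormSq_mul _ e hM, Matrix.mul_assoc]
        gcongr
        exact frobNormSq_mul_le (A := F₁) h₁

end TensorNorm

theorem Real.sqrt_le_sqrt_mul_sqrt_div_of_le {x a b m : ℝ} (ha : 0 ≤ a) (hb : 0 ≤ b) (hm : 0 ≤ m)
    (h : x ≤ a * b * m⁻¹ ^ 2) : √x ≤ √a * √b / m := by
  refine Real.sqrt_le_iff.mpr ⟨by positivity, ?_⟩
  rwa [div_pow, mul_pow, Real.sq_sqrt ha, Real.sq_sqrt hb, div_eq_mul_inv, ← inv_pow]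

theorem B4_bound_general (R1 R2 R3 I1 I2 : ℕ) (τ σR1 σR2 σR : ℝ) (hτ0 : 0 ≤ τ)
    (hσR1pos : 0 < σR1) (hσR2pos : 0 < σR2) (hσR : σR = min σR1 σR2)
    (W : Fin R1 → Fin R2 → Fin R3 → ℝ)
    -- mode-n unfoldings
    (W1 : Matrix (Fin R1) (Fin (R2 * R3)) ℝ)
    (hW1 : ∀ i j k, W1 i (finProdFinEquiv (j, k)) = W i j k)
    (W3 : Matrix (Fin R3) (Fin (R1 * R2)) ℝ)
    -- SVDs of the unfoldings
    (U1 : Matrix (Fin R1) (Fin R1) ℝ) (V1 : Matrix (Fin (R2 * R3)) (Fin (R2 * R3)) ℝ)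
    (hU1 : U1ᵀ * U1 = 1) (hV1 : V1ᵀ * V1 = 1)
    (σ1 : ℕ → ℝ)
    (hsvd1 : W1 = U1 * Matrix.of (fun (i : Fin R1) (j : Fin (R2 * R3)) =>
      if (i : ℕ) = (j : ℕ) then σ1 (i : ℕ) else 0) * V1ᵀ)
    (U2 : Matrix (Fin R2) (Fin R2) ℝ) (V2 : Matrix (Fin (R1 * R3)) (Fin (R1 * R3)) ℝ)
    (hU2 : U2ᵀ * U2 = 1) (hV2 : V2ᵀ * V2 = 1)
    (σ2 : ℕ → ℝ)
    (U3 : Matrix (Fin R3) (Fin R3) ℝ) (V3 : Matrix (Fin (R1 * R2)) (Fin (R1 * R2)) ℝ)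
    (hU3 : U3ᵀ * U3 = 1) (hV3 : V3ᵀ * V3 = 1)
    (σ3 : ℕ → ℝ)
    (hsvd3 : W3 = U3 * Matrix.of (fun (i : Fin R3) (j : Fin (R1 * R2)) =>
      if (i : ℕ) = (j : ℕ) then σ3 (i : ℕ) else 0) * V3ᵀ)
    -- τ-truncated pseudo-inverses
    (P1 : Matrix (Fin (R2 * R3)) (Fin R1) ℝ)
    (hP1 : P1 = V1 * Matrix.of (fun (j : Fin (R2 * R3)) (i : Fin R1) =>
      if (j : ℕ) = (i : ℕ) ∧ τ < σ1 (i : ℕ) then (σ1 (i : ℕ))⁻¹ else 0) * U1ᵀ)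
    (P2 : Matrix (Fin (R1 * R3)) (Fin R2) ℝ)
    (hP2 : P2 = V2 * Matrix.of (fun (j : Fin (R1 * R3)) (i : Fin R2) =>
      if (j : ℕ) = (i : ℕ) ∧ τ < σ2 (i : ℕ) then (σ2 (i : ℕ))⁻¹ else 0) * U2ᵀ)
    (P3 : Matrix (Fin (R1 * R2)) (Fin R3) ℝ)
    (hP3 : P3 = V3 * Matrix.of (fun (j : Fin (R1 * R2)) (i : Fin R3) =>
      if (j : ℕ) = (i : ℕ) ∧ τ < σ3 (i : ℕ) then (σ3 (i : ℕ))⁻¹ else 0) * U3ᵀ)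
    -- σR1, σR2: smallest positive singular values of W₍₁₎ and W₍₂₎:
    (hσR2 : ∀ i, 0 < σ2 i → σR2 ≤ σ2 i)
    (F1 : Matrix (Fin I1) (Fin (R2 * R3)) ℝ) (F2 : Matrix (Fin I2) (Fin (R1 * R3)) ℝ)
    -- Ω = W ×₁ W₍₁₎^{*τ} ×₂ W₍₂₎^{*τ} ×₃ W₍₃₎^{*τ}:
    (Ω : Fin (R2 * R3) → Fin (R1 * R3) → Fin (R1 * R2) → ℝ)
    (hΩ : ∀ a b c, Ω a b c = ∑ r1, ∑ r2, ∑ r3, P1 a r1 * P2 b r2 * P3 c r3 * W r1 r2 r3)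
    -- B₄ = Ω ×₁ F₁ ×₂ F₂ ×₃ W₍₃₎:
    (B4 : Fin I1 → Fin I2 → Fin R3 → ℝ)
    (hB4 : ∀ i j k, B4 i j k = ∑ a, ∑ b, ∑ c, F1 i a * F2 j b * W3 k c * Ω a b c) :
    Real.sqrt (∑ i, ∑ j, ∑ k, (B4 i j k) ^ 2)
      ≤ Real.sqrt (∑ i, ∑ a, (F1 i a) ^ 2) * Real.sqrt (∑ j, ∑ b, (F2 j b) ^ 2)
        / max τ σR := by
  rw [← rectDiag_truncInv] at hP1 hP2 hP3
  have hB4' : B4 = modeProd₃ (W3 * P3) (modeProd₂ (F2 * P2) (modeProd₁ (F1 * P1) W)) := by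
    have hΩ' : Ω = modeProd₃ P3 (modeProd₂ P2 (modeProd₁ P1 W)) := by
      ext a b c
      rw [hΩ, modeProd₃_modeProd₂_modeProd₁_apply]
    ext i j k
    rw [← modeProd_modeProd, ← hΩ', modeProd₃_modeProd₂_modeProd₁_apply, hB4]
  have hPW1 : OpNormSqLE (P1 * W1)ᵀ 1 := by
    rw [hP1, show W1 = U1 * rectDiag R1 (R2 * R3) σ1 * V1ᵀ from hsvd1]
    exact opNormSqLE_transpose_pinv_mul_svd hU1 hV1
  have hWP3 : OpNormSqLE (W3 * P3) 1 := by
    rw [hP3, show W3 = U3 * rectDiag R3 (R1 * R2) σ3 * V3ᵀ from hsvd3]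
    exact opNormSqLE_svd_mul_pinv hU3 hV3
  have key := tensorNormSq_modeProd_mul_le finProdFinEquiv hW1 F1 F2 hPW1
    (hP2 ▸ opNormSqLE_pinv hτ0 hσR2pos hσR2 hU2 hV2) hWP3 (by positivity) zero_le_one
  rw [← hB4', one_mul, one_mul] at key
  have hσR2le : (max τ σR2)⁻¹ ≤ (max τ σR)⁻¹ := by
    have : 0 < σR := hσR ▸ lt_min hσR1pos hσR2pos
    gcongr
    exact hσR ▸ min_le_right _ _
  have hF1 := frobNormSq_nonneg F1
  have hF2 := frobNormSq_nonneg F2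
  refine Real.sqrt_le_sqrt_mul_sqrt_div_of_le hF1 hF2 (hτ0.trans (le_max_left _ _)) ?_
  calc tensorNormSq B4 ≤ frobNormSq F2 * (max τ σR2)⁻¹ ^ 2 * frobNormSq F1 := key
    _ ≤ frobNormSq F2 * (max τ σR)⁻¹ ^ 2 * frobNormSq F1 := by gcongr
    _ = frobNormSq F1 * frobNormSq F2 * (max τ σR)⁻¹ ^ 2 := by ring

/-- bound on the quadratic error term B₄ = Ω ×₁ F₁ ×₂ F₂ ×₃ W₍₃₎ with
Ω = W ×₁ W₍₁₎^{*τ} ×₂ W₍₂₎^{*τ} ×₃ W₍₃₎^{*τ}: ‖B₄‖_F ≤ ‖F₁‖_F‖F₂‖_F / max(τ, σR). -/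
theorem B4_bound (R1 R2 R3 I1 I2 : ℕ) (τ σR1 σR2 σR : ℝ) (hτ0 : 0 ≤ τ)
    (hσR1pos : 0 < σR1) (hσR2pos : 0 < σR2) (hσR : σR = min σR1 σR2)
    (W : Fin R1 → Fin R2 → Fin R3 → ℝ)
    -- mode-n unfoldings
    (W1 : Matrix (Fin R1) (Fin (R2 * R3)) ℝ)
    (hW1 : ∀ i j k, W1 i (finProdFinEquiv (j, k)) = W i j k)
    (W2 : Matrix (Fin R2) (Fin (R1 * R3)) ℝ)
    (hW2 : ∀ i j k, W2 j (finProdFinEquiv (i, k)) = W i j k)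
    (W3 : Matrix (Fin R3) (Fin (R1 * R2)) ℝ)
    (hW3 : ∀ i j k, W3 k (finProdFinEquiv (i, j)) = W i j k)
    -- SVDs of the unfoldings
    (U1 : Matrix (Fin R1) (Fin R1) ℝ) (V1 : Matrix (Fin (R2 * R3)) (Fin (R2 * R3)) ℝ)
    (hU1 : U1ᵀ * U1 = 1) (hV1 : V1ᵀ * V1 = 1)
    (σ1 : ℕ → ℝ) (hσ1 : ∀ i, 0 ≤ σ1 i)
    (hsvd1 : W1 = U1 * Matrix.of (fun (i : Fin R1) (j : Fin (R2 * R3)) =>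
      if (i : ℕ) = (j : ℕ) then σ1 (i : ℕ) else 0) * V1ᵀ)
    (U2 : Matrix (Fin R2) (Fin R2) ℝ) (V2 : Matrix (Fin (R1 * R3)) (Fin (R1 * R3)) ℝ)
    (hU2 : U2ᵀ * U2 = 1) (hV2 : V2ᵀ * V2 = 1)
    (σ2 : ℕ → ℝ) (hσ2 : ∀ i, 0 ≤ σ2 i)
    (hsvd2 : W2 = U2 * Matrix.of (fun (i : Fin R2) (j : Fin (R1 * R3)) =>
      if (i : ℕ) = (j : ℕ) then σ2 (i : ℕ) else 0) * V2ᵀ)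
    (U3 : Matrix (Fin R3) (Fin R3) ℝ) (V3 : Matrix (Fin (R1 * R2)) (Fin (R1 * R2)) ℝ)
    (hU3 : U3ᵀ * U3 = 1) (hV3 : V3ᵀ * V3 = 1)
    (σ3 : ℕ → ℝ) (hσ3 : ∀ i, 0 ≤ σ3 i)
    (hsvd3 : W3 = U3 * Matrix.of (fun (i : Fin R3) (j : Fin (R1 * R2)) =>
      if (i : ℕ) = (j : ℕ) then σ3 (i : ℕ) else 0) * V3ᵀ)
    -- τ-truncated pseudo-inverses
    (P1 : Matrix (Fin (R2 * R3)) (Fin R1) ℝ)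
    (hP1 : P1 = V1 * Matrix.of (fun (j : Fin (R2 * R3)) (i : Fin R1) =>
      if (j : ℕ) = (i : ℕ) ∧ τ < σ1 (i : ℕ) then (σ1 (i : ℕ))⁻¹ else 0) * U1ᵀ)
    (P2 : Matrix (Fin (R1 * R3)) (Fin R2) ℝ)
    (hP2 : P2 = V2 * Matrix.of (fun (j : Fin (R1 * R3)) (i : Fin R2) =>
      if (j : ℕ) = (i : ℕ) ∧ τ < σ2 (i : ℕ) then (σ2 (i : ℕ))⁻¹ else 0) * U2ᵀ)
    (P3 : Matrix (Fin (R1 * R2)) (Fin R3) ℝ)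
    (hP3 : P3 = V3 * Matrix.of (fun (j : Fin (R1 * R2)) (i : Fin R3) =>
      if (j : ℕ) = (i : ℕ) ∧ τ < σ3 (i : ℕ) then (σ3 (i : ℕ))⁻¹ else 0) * U3ᵀ)
    -- σR1, σR2: smallest positive singular values of W₍₁₎ and W₍₂₎:
    (hσR1 : ∀ i, 0 < σ1 i → σR1 ≤ σ1 i)
    (hσR2 : ∀ i, 0 < σ2 i → σR2 ≤ σ2 i)
    -- τ does not exceed the largest singular value of each unfolding:
    (hτ1 : ∃ i : Fin R1, ∃ j : Fin (R2 * R3), (i : ℕ) = (j : ℕ) ∧ τ ≤ σ1 (i : ℕ))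
    (hτ2 : ∃ i : Fin R2, ∃ j : Fin (R1 * R3), (i : ℕ) = (j : ℕ) ∧ τ ≤ σ2 (i : ℕ))
    (hτ3 : ∃ i : Fin R3, ∃ j : Fin (R1 * R2), (i : ℕ) = (j : ℕ) ∧ τ ≤ σ3 (i : ℕ))
    (F1 : Matrix (Fin I1) (Fin (R2 * R3)) ℝ) (F2 : Matrix (Fin I2) (Fin (R1 * R3)) ℝ)
    -- Ω = W ×₁ W₍₁₎^{*τ} ×₂ W₍₂₎^{*τ} ×₃ W₍₃₎^{*τ}:
    (Ω : Fin (R2 * R3) → Fin (R1 * R3) → Fin (R1 * R2) → ℝ)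
    (hΩ : ∀ a b c, Ω a b c = ∑ r1, ∑ r2, ∑ r3, P1 a r1 * P2 b r2 * P3 c r3 * W r1 r2 r3)
    -- B₄ = Ω ×₁ F₁ ×₂ F₂ ×₃ W₍₃₎:
    (B4 : Fin I1 → Fin I2 → Fin R3 → ℝ)
    (hB4 : ∀ i j k, B4 i j k = ∑ a, ∑ b, ∑ c, F1 i a * F2 j b * W3 k c * Ω a b c) :
    Real.sqrt (∑ i, ∑ j, ∑ k, (B4 i j k) ^ 2)
      ≤ Real.sqrt (∑ i, ∑ a, (F1 i a) ^ 2) * Real.sqrt (∑ j, ∑ b, (F2 j b) ^ 2)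
        / max τ σR :=
  B4_bound_general R1 R2 R3 I1 I2 τ σR1 σR2 σR hτ0 hσR1pos hσR2pos hσR W W1 hW1 W3 U1 V1 hU1 hV1 σ1
    hsvd1 U2 V2 hU2 hV2 σ2 U3 V3 hU3 hV3 σ3 hsvd3 P1 hP1 P2 hP2 P3 hP3 hσR2 F1 F2 Ω hΩ B4 hB4
end
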